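/- Let (T, M) be a local domain with residue field k and residue map π : T → k, and let D be an integral domain with fraction field k, viewed as a subring of k. Let S be an overring of D, i.e., a subring of k containing D. If S is flat as a D-module, then the pullback S ×_k T = π⁻¹(S) is flat as a module over D ×_k T = π⁻¹(D). -/

import Mathlib

/-!
Write `R = π⁻¹(D) ⊆ A = π⁻¹(S)`. Flatness is local on the maximal ideals `N` of `A`, so it
suffices that each `A_N` is the localization of `R` at `N ∩ R`. As `M = ker π` lies in the
Jacobson radical of `A`, `N` is the preimage of an ideal `P` of `S`. Flatness of the overring `S`
gives `S_P ⊆ D_{P ∩ D}` (one half of Richman's characterization of flat overrings, read off from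
the equational criterion): for `a, w ∈ A` with `w ∉ N`, `π a / π w = d / e` with `e ∈ D \ P`.
Lifting `d, e` to `T` and correcting the numerator by an element of `M` gives `σ a = ρ w` with
`ρ, σ ∈ R` and `σ ∉ N`.
-/

theorem Module.Flat.exists_smul_eq_smul_of_isFractionRing
    {D S K : Type*} [CommRing D] [CommRing S] [Field K] [Algebra D S] [Algebra D K]
    [Algebra S K] [IsScalarTower D S K] [IsFractionRing D K] [Module.Flat D S]
    (hSK : Function.Injective (algebraMap S K)) (P : Ideal S) {x y : S} (hy : y ∉ P) :
    ∃ d e : D, algebraMap D S e ∉ P ∧ e • x = d • y := by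
  have := (IsFractionRing.nontrivial_iff_nontrivial D K).mpr inferInstance
  have hy0 : algebraMap S K y ≠ 0 :=
    fun h => hy ((map_eq_zero_iff _ hSK).mp h ▸ P.zero_mem)
  obtain ⟨b, c, hc, hbc⟩ :=
    IsFractionRing.div_surjective D (algebraMap S K x / algebraMap S K y)
  have hc0 : algebraMap D K c ≠ 0 := IsFractionRing.to_map_ne_zero_of_mem_nonZeroDivisors hc
  rw [div_eq_div_iff hc0 hy0] at hbc
  -- the relation `c • x - b • y = 0`; a factorization of it through a free module yields `d / e`
  have hrel : ∑ i, ![c, -b] i • ![x, y] i = 0 := by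
    apply hSK
    simp only [Fin.sum_univ_two, Matrix.cons_val_zero, Matrix.cons_val_one, map_add, map_zero,
      Algebra.smul_def, map_mul, map_neg, ← IsScalarTower.algebraMap_apply]
    linear_combination -hbc
  obtain ⟨n, C, z, hxy, hC⟩ := Module.Flat.isTrivialRelation_of_sum_smul_eq_zero
    (R := D) (M := S) (f := ![c, -b]) (x := ![x, y]) hrel
  obtain ⟨j, hj⟩ : ∃ j, C 1 j • z j ∉ P := by
    by_contra! h
    exact hy ((show y = ∑ j, C 1 j • z j from hxy 1) ▸ P.sum_mem fun j _ => h j)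
  refine ⟨C 0 j, C 1 j,
    fun he => hj (Algebra.smul_def (C 1 j) (z j) ▸ P.mul_mem_right _ he), ?_⟩
  have hCj : algebraMap D K c * algebraMap D K (C 0 j) =
      algebraMap D K b * algebraMap D K (C 1 j) := by
    simpa [Fin.sum_univ_two, ← map_mul, sub_eq_zero, ← sub_eq_add_neg] using
      congrArg (algebraMap D K) (hC j)
  apply hSK
  simp only [Algebra.smul_def, map_mul, ← IsScalarTower.algebraMap_apply]
  apply mul_left_cancel₀ hc0
  linear_combination -algebraMap D K (C 1 j) * hbc - algebraMap S K y * hCj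

theorem IsLocalization.atPrime_comap_of_forall_exists_smul_eq
    {R A : Type*} [CommRing R] [CommRing A] [Algebra R A]
    (hinj : Function.Injective (algebraMap R A)) (N : Ideal A) [N.IsPrime]
    (h : ∀ a w : A, w ∉ N → ∃ ρ σ : R, algebraMap R A σ ∉ N ∧ σ • a = ρ • w) :
    IsLocalization.AtPrime (Localization.AtPrime N) (N.comap (algebraMap R A)) where
  map_units σ := by
    rw [IsScalarTower.algebraMap_apply R A]
    exact IsLocalization.map_units _ (⟨_, σ.2⟩ : N.primeCompl)
  surj z := by
    obtain ⟨⟨a, w⟩, rfl⟩ := IsLocalization.mk'_surjective N.primeCompl z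
    obtain ⟨ρ, σ, hσ, hσρ⟩ := h a w w.2
    refine ⟨(ρ, ⟨σ, hσ⟩), ?_⟩
    simp only [IsScalarTower.algebraMap_apply R A (Localization.AtPrime N)]
    rw [mul_comm, IsLocalization.mul_mk'_eq_mk'_of_mul, IsLocalization.mk'_eq_iff_eq_mul,
      ← map_mul, ← Algebra.smul_def, hσρ, Algebra.smul_def]
  exists_of_eq {x y} hxy := by
    rw [IsScalarTower.algebraMap_apply R A, IsScalarTower.algebraMap_apply R A _ y] at hxy
    obtain ⟨c, hc⟩ := IsLocalization.exists_of_eq (M := N.primeCompl) hxy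
    obtain ⟨ρ, σ, hσ, hσρ⟩ := h 1 c c.2
    rw [Algebra.smul_def, Algebra.smul_def, mul_one] at hσρ
    refine ⟨⟨σ, hσ⟩, hinj ?_⟩
    rw [map_mul, map_mul, hσρ, mul_assoc, hc, mul_assoc]

open IsLocalRing

namespace IsLocalRing

variable {T k : Type*} [CommRing T] [IsLocalRing T] [Field k] {π : T →+* k}

theorem isUnit_of_map_ne_zero (hker : RingHom.ker π = maximalIdeal T) {t : T} (ht : π t ≠ 0) :
    IsUnit t :=
  notMem_maximalIdeal.mp (hker ▸ ht)

theorem exists_lifts_mul_eq_mul (hπ : Function.Surjective π)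
    (hker : RingHom.ker π = maximalIdeal T) {a w : T} (hw : π w ≠ 0) {d e : k} (he : e ≠ 0)
    (h : e * π a = d * π w) : ∃ ρ σ : T, π ρ = d ∧ π σ = e ∧ σ * a = ρ * w := by
  obtain ⟨σ, rfl⟩ := hπ e
  obtain ⟨ρ₀, rfl⟩ := hπ d
  obtain ⟨u, hu⟩ := (isUnit_of_map_ne_zero hker he).mul (isUnit_of_map_ne_zero hker hw)
  -- `σ a - ρ₀ w ∈ M`, so adding `μ σ` to `ρ₀` fixes the relation without changing `π ρ₀`
  set μ := ↑u⁻¹ * (σ * a - ρ₀ * w)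
  have hμ : μ * (σ * w) = σ * a - ρ₀ * w := by rw [← hu, mul_comm, Units.mul_inv_cancel_left]
  refine ⟨ρ₀ + μ * σ, σ, ?_, rfl, by linear_combination -hμ⟩
  simp [μ, h]

end IsLocalRing

namespace Subring

variable {T k : Type*} [CommRing T] [IsLocalRing T] [Field k] {π : T →+* k}

theorem mem_of_isMaximal_of_map_eq_zero (hker : RingHom.ker π = maximalIdeal T)
    (S : Subring k) {N : Ideal (S.comap π)} (hN : N.IsMaximal) {a : S.comap π}
    (ha : π a = 0) : a ∈ N := by
  by_contra haN
  obtain ⟨y, i, hi, hyi⟩ := hN.exists_inv haN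
  have hπi : π i = 1 := by simpa [ha] using congrArg (π ∘ Subtype.val) hyi
  obtain ⟨u, hu⟩ := isUnit_of_map_ne_zero hker (hπi ▸ one_ne_zero : π i ≠ 0)
  have hπu : π ↑u⁻¹ = 1 := by
    have h := congrArg π u.inv_mul
    rwa [map_mul, hu, hπi, mul_one, map_one] at h
  have hiu : i * ⟨↑u⁻¹, by simp [hπu, one_mem]⟩ = 1 := Subtype.ext (by simp [← hu])
  exact hN.ne_top (N.eq_top_of_isUnit_mem hi (.of_mul_eq_one _ hiu))

theorem exists_smul_eq_smul_comap_of_flat (hπ : Function.Surjective π)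
    (hker : RingHom.ker π = maximalIdeal T) {D S : Subring k} [IsFractionRing D k]
    [Algebra D S] [IsScalarTower D S k] [Module.Flat D S]
    [Algebra (D.comap π) (S.comap π)] [IsScalarTower (D.comap π) (S.comap π) T]
    (N : Ideal (S.comap π)) [hN : N.IsMaximal] (a w : S.comap π) (hw : w ∉ N) :
    ∃ ρ σ : D.comap π, algebraMap _ (S.comap π) σ ∉ N ∧ σ • a = ρ • w := by
  set r : S.comap π →+* S := π.restrict _ S fun _ h => h
  have hr : Function.Surjective r := by
    rintro ⟨s, hs⟩
    obtain ⟨t, rfl⟩ := hπ s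
    exact ⟨⟨t, hs⟩, rfl⟩
  have hrN : ∀ b, b ∈ N ↔ r b ∈ N.map r := by
    intro b
    rw [← Ideal.mem_comap, Ideal.comap_map_of_surjective' r hr, sup_eq_left.mpr]
    exact fun b hb => mem_of_isMaximal_of_map_eq_zero hker S hN (congrArg Subtype.val hb)
  have hπw : π w ≠ 0 := fun h => hw (mem_of_isMaximal_of_map_eq_zero hker S hN h)
  obtain ⟨d, e, he, hde⟩ := Module.Flat.exists_smul_eq_smul_of_isFractionRing (D := D)
    Subtype.val_injective (N.map r) (x := r a) ((hrN w).not.mp hw)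
  have he0 : (e : k) ≠ 0 := fun h => he <| by
    rw [show e = 0 from Subtype.ext h, map_zero]
    exact Ideal.zero_mem _
  have hkey : (e : k) * π a = d * π w := by
    have h := congrArg (algebraMap S k) hde
    rwa [Algebra.smul_def, Algebra.smul_def, map_mul, map_mul, ← IsScalarTower.algebraMap_apply,
      ← IsScalarTower.algebraMap_apply] at h
  obtain ⟨ρ, σ, hρ, hσ, hσρ⟩ := exists_lifts_mul_eq_mul hπ hker hπw he0 hkey
  refine ⟨⟨ρ, by simp [hρ]⟩, ⟨σ, by simp [hσ]⟩, ?_, ?_⟩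
  · rw [hrN]
    convert he
    apply Subtype.ext
    change π (algebraMap _ T (algebraMap _ (S.comap π) _)) = algebraMap S k (algebraMap D S e)
    rwa [← IsScalarTower.algebraMap_apply, ← IsScalarTower.algebraMap_apply]
  · apply Subtype.val_injective
    change algebraMap _ T (_ • a) = algebraMap _ T (_ • w)
    rwa [Algebra.smul_def, Algebra.smul_def, map_mul, map_mul, ← IsScalarTower.algebraMap_apply,
      ← IsScalarTower.algebraMap_apply]

end Subring

theorem stmt_9 {T k : Type*} [CommRing T] [IsLocalRing T] [Field k]
    (π : T →+* k) (hπ : Function.Surjective π)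
    (hker : RingHom.ker π = IsLocalRing.maximalIdeal T)
    (D : Subring k) [IsFractionRing D k]
    (S : Subring k) (hDS : D ≤ S)
    (hflat : @Module.Flat D S _ _ (RingHom.toAlgebra (Subring.inclusion hDS)).toModule) :
    @Module.Flat (D.comap π) (S.comap π) _ _
      (RingHom.toAlgebra
        (Subring.inclusion (fun _ hx => hDS hx : D.comap π ≤ S.comap π))).toModule := by
  let := (Subring.inclusion hDS).toAlgebra
  have : IsScalarTower D S k := .of_algebraMap_eq fun _ => rfl
  have hRA : D.comap π ≤ S.comap π := fun _ hx => hDS hx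
  let := (Subring.inclusion hRA).toAlgebra
  have : IsScalarTower (D.comap π) (S.comap π) T := .of_algebraMap_eq fun _ => rfl
  refine Module.flat_of_isLocalized_maximal (S.comap π) (S.comap π)
    (fun N => Localization.AtPrime N) (fun N => Algebra.linearMap _ _) fun N _ => ?_
  have := IsLocalization.atPrime_comap_of_forall_exists_smul_eq (Subring.inclusion_injective hRA)
    N (Subring.exists_smul_eq_smul_comap_of_flat hπ hker N)
  exact IsLocalization.flat _ (N.comap (algebraMap (D.comap π) (S.comap π))).primeCompl
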